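/- arXiv:2307.14023 — 4 statements merged into one kernel-verified Lean document; each statement's English description precedes it below -/
import Mathlib

section
/- For every embedding dimension d ≥ 1 and every head size s ≥ 1, there exist a sequence length n, input sequences X⁽¹⁾, X⁽²⁾ ∈ ℝ^{d×n} that are tokenwise (r_min, r_max, ε)-separated for some 0 < r_min < r_max and ε > 0, have no duplicate token within each sequence, satisfy 𝒱⁽¹⁾ ≠ 𝒱⁽²⁾, and share a common token X⁽¹⁾_{:,k} = X⁽²⁾_{:,l} for some columns k, l, such that for every number of heads h ≥ 1 and every choice of weight matrices W_i^{(O)} ∈ ℝ^{d×s}, W_i^{(V)}, W_i^{(K)}, W_i^{(Q)} ∈ ℝ^{s×d} (i = 1,…,h), the one-layer multi-head hardmax self-attention with skip connection satisfies ℱ_H^{(SA)}(X⁽¹⁾)_{:,k} = ℱ_H^{(SA)}(X⁽²⁾)_{:,l}; consequently ℱ_H^{(SA)} is not an (r, δ)-contextual mapping for {X⁽¹⁾, X⁽²⁾} for any r > 0 and δ > 0. -/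
open scoped BigOperators Classical
open Matrix

noncomputable section

def softmax {n : ℕ} (a : Fin n → ℝ) : Fin n → ℝ :=
  fun i => Real.exp (a i) / ∑ j, Real.exp (a j)

def boltz {n : ℕ} (a : Fin n → ℝ) : ℝ := ∑ i, a i * softmax a i

def argmaxSet {n : ℕ} (a : Fin n → ℝ) : Finset (Fin n) :=
  Finset.univ.filter (fun i => ∀ j, a j ≤ a i)

def hardmax {n : ℕ} (a : Fin n → ℝ) : Fin n → ℝ :=
  fun i => if i ∈ argmaxSet a then (1 : ℝ) / (argmaxSet a).card else 0

def softmaxCols {n m : ℕ} (A : Matrix (Fin n) (Fin m) ℝ) : Matrix (Fin n) (Fin m) ℝ :=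
  Matrix.of fun i k => softmax (fun j => A j k) i

def hardmaxCols {n m : ℕ} (A : Matrix (Fin n) (Fin m) ℝ) : Matrix (Fin n) (Fin m) ℝ :=
  Matrix.of fun i k => hardmax (fun j => A j k) i

def attnS {d n s : ℕ} (WO : Matrix (Fin d) (Fin s) ℝ)
    (WV WK WQ : Matrix (Fin s) (Fin d) ℝ) (Z : Matrix (Fin d) (Fin n) ℝ) :
    Matrix (Fin d) (Fin n) ℝ :=
  Z + WO * (WV * Z) * softmaxCols ((WK * Z)ᵀ * (WQ * Z))

def attnH {d n s h : ℕ} (WO : Fin h → Matrix (Fin d) (Fin s) ℝ)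
    (WV WK WQ : Fin h → Matrix (Fin s) (Fin d) ℝ) (Z : Matrix (Fin d) (Fin n) ℝ) :
    Matrix (Fin d) (Fin n) ℝ :=
  Z + ∑ i, WO i * (WV i * Z) * hardmaxCols ((WK i * Z)ᵀ * (WQ i * Z))

def l2norm {d : ℕ} (x : Fin d → ℝ) : ℝ := Real.sqrt (∑ t, (x t) ^ 2)

def TokSep {d n N : ℕ} (rmin rmax δ : ℝ) (X : Fin N → Matrix (Fin d) (Fin n) ℝ) : Prop :=
  (∀ i k, rmin < l2norm (fun t => X i t k)) ∧
  (∀ i k, l2norm (fun t => X i t k) < rmax) ∧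
  (∀ i j k l, (fun t => X i t k) ≠ (fun t => X j t l) →
    δ < l2norm (fun t => X i t k - X j t l))

def vocab {d n : ℕ} (X : Matrix (Fin d) (Fin n) ℝ) : Finset (Fin d → ℝ) :=
  Finset.image (fun k => (fun t => X t k)) Finset.univ

def ContextualMapping {d n N : ℕ} (X : Fin N → Matrix (Fin d) (Fin n) ℝ)
    (q : Matrix (Fin d) (Fin n) ℝ → Matrix (Fin d) (Fin n) ℝ) (r δ : ℝ) : Prop :=
  (∀ i k, l2norm (fun t => q (X i) t k) < r) ∧
  (∀ i j k l, (vocab (X i) ≠ vocab (X j) ∨ (fun t => X i t k) ≠ (fun t => X j t l)) →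
    δ < l2norm (fun t => q (X i) t k - q (X j) t l))

def ffn {d n q : ℕ} (W1 : Matrix (Fin q) (Fin d) ℝ) (W2 : Matrix (Fin d) (Fin q) ℝ)
    (b1 : Fin q → ℝ) (b2 : Fin d → ℝ) (H : Matrix (Fin d) (Fin n) ℝ) :
    Matrix (Fin d) (Fin n) ℝ :=
  Matrix.of fun t k =>
    H t k + W2.mulVec (fun u => max 0 (W1.mulVec (fun t' => H t' k) u + b1 u)) t + b2 t

def logSumExp {n : ℕ} (a : Fin n → ℝ) : ℝ := Real.log (∑ i, Real.exp (a i))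

def entS {n : ℕ} (p : Fin n → ℝ) : ℝ := -∑ i, p i * Real.log (p i)

/-! On a rank-one input `Z = u vᵀ` the scores of a hardmax head for the query token `k` are
`β v_k v_j` with `β = ⟪W^K u, W^Q u⟫`, so the head returns `W^O W^V u` times the maximum, the
minimum or the mean of `v`, according to the sign of `β v_k`. Two scalar sequences with the same
maximum, minimum and sum, here `(1, 2, 8, 9)` and `(1, 3, 7, 9)`, therefore produce the same
output at their common first token under every multi-head layer, although their vocabularies
differ. -/

section Hardmax

variable {n : ℕ}

lemma sum_mul_hardmax_of_forall_mem_argmaxSet {a v : Fin n → ℝ} {m : ℝ}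
    (hne : (argmaxSet a).Nonempty) (hv : ∀ i ∈ argmaxSet a, v i = m) :
    ∑ j, v j * hardmax a j = m := by
  have hcard : ((argmaxSet a).card : ℝ) ≠ 0 := by exact_mod_cast hne.card_pos.ne'
  simp only [hardmax, mul_ite, mul_zero]
  rw [Finset.sum_ite_mem, Finset.univ_inter, Finset.sum_congr rfl fun i hi => by rw [hv i hi],
    Finset.sum_const, nsmul_eq_mul]
  field_simp

lemma sum_mul_hardmax_mul_const_of_pos {v : Fin n → ℝ} {M c : ℝ}
    (hM : IsGreatest (Set.range v) M) (hc : 0 < c) :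
    ∑ j, v j * hardmax (fun j => v j * c) j = M := by
  obtain ⟨⟨i, rfl⟩, hle⟩ := hM
  have hv : ∀ j, v j ≤ v i := fun j => hle ⟨j, rfl⟩
  refine sum_mul_hardmax_of_forall_mem_argmaxSet ⟨i, ?_⟩ fun j hj => ?_
  · simpa [argmaxSet] using fun j => mul_le_mul_of_nonneg_right (hv j) hc.le
  · simp only [argmaxSet, Finset.mem_filter, Finset.mem_univ, true_and] at hj
    exact le_antisymm (hv j) (le_of_mul_le_mul_right (hj i) hc)

lemma sum_mul_hardmax_mul_const_of_neg {v : Fin n → ℝ} {m c : ℝ}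
    (hm : IsLeast (Set.range v) m) (hc : c < 0) :
    ∑ j, v j * hardmax (fun j => v j * c) j = m := by
  obtain ⟨⟨i, rfl⟩, hle⟩ := hm
  have hv : ∀ j, v i ≤ v j := fun j => hle ⟨j, rfl⟩
  refine sum_mul_hardmax_of_forall_mem_argmaxSet ⟨i, ?_⟩ fun j hj => ?_
  · simpa [argmaxSet] using fun j => mul_le_mul_of_nonpos_right (hv j) hc.le
  · simp only [argmaxSet, Finset.mem_filter, Finset.mem_univ, true_and] at hj
    exact le_antisymm ((mul_le_mul_right_of_neg hc).mp (hj i)) (hv j)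

lemma sum_mul_hardmax_mul_zero (v : Fin n → ℝ) :
    ∑ j, v j * hardmax (fun j => v j * 0) j = (∑ j, v j) / n := by
  have hall : argmaxSet (fun _ => (0 : ℝ)) = (Finset.univ : Finset (Fin n)) := by
    ext j; simp [argmaxSet]
  simp only [mul_zero, hardmax, hall, Finset.mem_univ, if_true, Finset.card_univ, Fintype.card_fin]
  rw [← Finset.sum_mul, mul_one_div]

theorem sum_mul_hardmax_mul_const_congr {v w : Fin n → ℝ} {M m : ℝ}
    (hMv : IsGreatest (Set.range v) M) (hMw : IsGreatest (Set.range w) M)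
    (hmv : IsLeast (Set.range v) m) (hmw : IsLeast (Set.range w) m)
    (hsum : ∑ j, v j = ∑ j, w j) (c : ℝ) :
    ∑ j, v j * hardmax (fun j => v j * c) j = ∑ j, w j * hardmax (fun j => w j * c) j := by
  rcases lt_trichotomy c 0 with hc | rfl | hc
  · rw [sum_mul_hardmax_mul_const_of_neg hmv hc, sum_mul_hardmax_mul_const_of_neg hmw hc]
  · rw [sum_mul_hardmax_mul_zero, sum_mul_hardmax_mul_zero, hsum]
  · rw [sum_mul_hardmax_mul_const_of_pos hMv hc, sum_mul_hardmax_mul_const_of_pos hMw hc]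

end Hardmax

section RankOne

variable {d n s : ℕ}

lemma hardmaxHead_vecMulVec_apply (WO : Matrix (Fin d) (Fin s) ℝ)
    (WV WK WQ : Matrix (Fin s) (Fin d) ℝ) (u : Fin d → ℝ) (v : Fin n → ℝ) (t : Fin d) (k : Fin n) :
    (WO * (WV * vecMulVec u v) * hardmaxCols ((WK * vecMulVec u v)ᵀ * (WQ * vecMulVec u v))) t k
      = (WO *ᵥ WV *ᵥ u) t *
          ∑ j, v j * hardmax (fun j => v j * ((WK *ᵥ u) ⬝ᵥ (WQ *ᵥ u) * v k)) j := by
  rw [mul_vecMulVec, mul_vecMulVec, mul_vecMulVec, mul_vecMulVec, transpose_vecMulVec,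
    vecMulVec_mul_vecMulVec, mul_apply, Finset.mul_sum]
  simp only [vecMulVec_apply, hardmaxCols, of_apply, Pi.smul_apply, smul_eq_mul, mul_assoc]

theorem attnH_vecMulVec_apply_eq {h : ℕ} (WO : Fin h → Matrix (Fin d) (Fin s) ℝ)
    (WV WK WQ : Fin h → Matrix (Fin s) (Fin d) ℝ) (u : Fin d → ℝ) {v w : Fin n → ℝ}
    (hvw : ∀ c, ∑ j, v j * hardmax (fun j => v j * c) j = ∑ j, w j * hardmax (fun j => w j * c) j)
    {k l : Fin n} (hkl : v k = w l) (t : Fin d) :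
    attnH WO WV WK WQ (vecMulVec u v) t k = attnH WO WV WK WQ (vecMulVec u w) t l := by
  simp only [attnH, Matrix.add_apply, Matrix.sum_apply, hardmaxHead_vecMulVec_apply, vecMulVec_apply,
    hkl, hvw]

lemma injective_mul_vec_of_ne_zero {u : Fin d → ℝ} (hu : u ≠ 0) :
    Function.Injective fun (a : ℝ) t => u t * a := by
  obtain ⟨i, hi⟩ := Function.ne_iff.mp hu
  exact fun a b hab => mul_left_cancel₀ hi (congrFun hab i)

lemma vocab_vecMulVec (u : Fin d → ℝ) (v : Fin n → ℝ) :
    vocab (vecMulVec u v) = (Finset.univ.image v).image fun a t => u t * a := by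
  rw [vocab, Finset.image_image]
  rfl

lemma vocab_vecMulVec_ne {u : Fin d → ℝ} (hu : u ≠ 0) {v w : Fin n → ℝ}
    (hvw : Finset.univ.image v ≠ Finset.univ.image w) :
    vocab (vecMulVec u v) ≠ vocab (vecMulVec u w) := by
  rw [vocab_vecMulVec, vocab_vecMulVec]
  exact (Finset.image_injective (injective_mul_vec_of_ne_zero hu)).ne hvw

lemma l2norm_mul_const (x : Fin d → ℝ) (a : ℝ) : l2norm (fun t => x t * a) = l2norm x * |a| := by
  simp only [l2norm, mul_pow, ← Finset.sum_mul]
  rw [Real.sqrt_mul (Finset.sum_nonneg fun _ _ => sq_nonneg _), Real.sqrt_sq_eq_abs]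

lemma l2norm_single_one (i : Fin d) : l2norm (Pi.single i (1 : ℝ)) = 1 := by
  simp [l2norm, Pi.single_apply, ite_pow]

lemma tokSep_vecMulVec {N : ℕ} {u : Fin d → ℝ} (hu : l2norm u = 1) {V : Fin N → Fin n → ℝ}
    {rmin rmax δ : ℝ} (hlo : ∀ i k, rmin < |V i k|) (hhi : ∀ i k, |V i k| < rmax)
    (hsep : ∀ i j k l, V i k ≠ V j l → δ < |V i k - V j l|) :
    TokSep rmin rmax δ fun i => vecMulVec u (V i) := by
  refine ⟨fun i k => ?_, fun i k => ?_, fun i j k l hne => ?_⟩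
  · simpa [vecMulVec_apply, l2norm_mul_const, hu] using hlo i k
  · simpa [vecMulVec_apply, l2norm_mul_const, hu] using hhi i k
  · have hV : V i k ≠ V j l := fun h => hne (by simp [vecMulVec_apply, h])
    simpa [vecMulVec_apply, ← mul_sub, l2norm_mul_const, hu] using hsep i j k l hV

end RankOne

lemma not_contextualMapping_of_apply_eq {N d n : ℕ} {X : Fin N → Matrix (Fin d) (Fin n) ℝ}
    {q : Matrix (Fin d) (Fin n) ℝ → Matrix (Fin d) (Fin n) ℝ} {r δ : ℝ} (hδ : 0 ≤ δ)
    {i j : Fin N} {k l : Fin n} (hvoc : vocab (X i) ≠ vocab (X j))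
    (hq : ∀ t, q (X i) t k = q (X j) t l) :
    ¬ ContextualMapping X q r δ := by
  rintro ⟨-, hsep⟩
  have hlt := hsep i j k l (Or.inl hvoc)
  simp [hq, l2norm] at hlt
  linarith

def counterexampleValues : Fin 2 → Fin 4 → ℝ :=
  fun i k => ((![![1, 2, 8, 9], ![1, 3, 7, 9]] i k : ℤ) : ℝ)

lemma counterexampleValues_injective (i : Fin 2) : Function.Injective (counterexampleValues i) := by
  intro a b hab
  fin_cases i <;> fin_cases a <;> fin_cases b <;> simp [counterexampleValues] at hab ⊢

lemma counterexampleValues_extrema (i : Fin 2) :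
    IsGreatest (Set.range (counterexampleValues i)) 9 ∧
      IsLeast (Set.range (counterexampleValues i)) 1 := by
  refine ⟨⟨⟨3, ?_⟩, ?_⟩, ⟨⟨0, ?_⟩, ?_⟩⟩ <;> (try rintro _ ⟨j, rfl⟩; fin_cases j) <;>
    fin_cases i <;> simp [counterexampleValues] <;> norm_num

lemma sum_counterexampleValues :
    ∑ j, counterexampleValues 0 j = ∑ j, counterexampleValues 1 j := by
  simp [counterexampleValues, Fin.sum_univ_four]
  norm_num

lemma image_counterexampleValues_ne :
    Finset.univ.image (counterexampleValues 0) ≠ Finset.univ.image (counterexampleValues 1) := by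
  intro himage
  have h2 : counterexampleValues 0 1 ∈ Finset.univ.image (counterexampleValues 1) :=
    himage ▸ Finset.mem_image_of_mem _ (Finset.mem_univ _)
  simp [counterexampleValues, Fin.exists_fin_succ] at h2

lemma abs_counterexampleValues_mem (i : Fin 2) (k : Fin 4) :
    1 / 2 < |counterexampleValues i k| ∧ |counterexampleValues i k| < 10 := by
  fin_cases i <;> fin_cases k <;> simp [counterexampleValues] <;> norm_num

lemma one_le_abs_intCast_sub {a b : ℤ} (h : (a : ℝ) ≠ b) : 1 ≤ |(a : ℝ) - b| := by
  exact_mod_cast Int.one_le_abs (sub_ne_zero.mpr (by exact_mod_cast h))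

lemma abs_counterexampleValues_sub {i j : Fin 2} {k l : Fin 4}
    (h : counterexampleValues i k ≠ counterexampleValues j l) :
    1 / 2 < |counterexampleValues i k - counterexampleValues j l| := by
  exact (by norm_num : (1 : ℝ) / 2 < 1).trans_le (one_le_abs_intCast_sub h)

theorem statement0_general (d s : ℕ) (hd : 1 ≤ d) :
    ∃ (n : ℕ) (X1 X2 : Matrix (Fin d) (Fin n) ℝ) (rmin rmax ε : ℝ) (k l : Fin n),
      0 < rmin ∧ rmin < rmax ∧ 0 < ε ∧
      TokSep rmin rmax ε ![X1, X2] ∧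
      (∀ k' l' : Fin n, k' ≠ l' → (fun t => X1 t k') ≠ (fun t => X1 t l')) ∧
      (∀ k' l' : Fin n, k' ≠ l' → (fun t => X2 t k') ≠ (fun t => X2 t l')) ∧
      vocab X1 ≠ vocab X2 ∧
      (fun t => X1 t k) = (fun t => X2 t l) ∧
      ∀ (h : ℕ), 1 ≤ h →
        ∀ (WO : Fin h → Matrix (Fin d) (Fin s) ℝ)
          (WV WK WQ : Fin h → Matrix (Fin s) (Fin d) ℝ),
          (∀ t, attnH WO WV WK WQ X1 t k = attnH WO WV WK WQ X2 t l) ∧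
          ∀ r δ : ℝ, 0 < r → 0 < δ →
            ¬ ContextualMapping ![X1, X2] (attnH WO WV WK WQ) r δ := by
  set u : Fin d → ℝ := Pi.single ⟨0, hd⟩ 1
  set V := counterexampleValues
  have hu : l2norm u = 1 := l2norm_single_one _
  have hu0 : u ≠ 0 := fun h0 => by simp [h0, l2norm] at hu
  have hvoc : vocab (vecMulVec u (V 0)) ≠ vocab (vecMulVec u (V 1)) :=
    vocab_vecMulVec_ne hu0 image_counterexampleValues_ne
  have hhardmax := sum_mul_hardmax_mul_const_congr (counterexampleValues_extrema 0).1
    (counterexampleValues_extrema 1).1 (counterexampleValues_extrema 0).2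
    (counterexampleValues_extrema 1).2 sum_counterexampleValues
  have hattn : ∀ (h : ℕ) (WO : Fin h → Matrix (Fin d) (Fin s) ℝ)
      (WV WK WQ : Fin h → Matrix (Fin s) (Fin d) ℝ) (t : Fin d),
      attnH WO WV WK WQ (vecMulVec u (V 0)) t 0 = attnH WO WV WK WQ (vecMulVec u (V 1)) t 0 :=
    fun h WO WV WK WQ => attnH_vecMulVec_apply_eq WO WV WK WQ u hhardmax rfl
  have hsep : TokSep (1 / 2) 10 (1 / 2) fun i => vecMulVec u (V i) :=
    tokSep_vecMulVec hu (fun i k => (abs_counterexampleValues_mem i k).1)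
      (fun i k => (abs_counterexampleValues_mem i k).2)
      fun _ _ _ _ => abs_counterexampleValues_sub
  have hcols : ∀ i, ∀ k l : Fin 4, k ≠ l →
      (fun t => vecMulVec u (V i) t k) ≠ (fun t => vecMulVec u (V i) t l) :=
    fun i k l hkl hcol =>
      hkl (counterexampleValues_injective i (injective_mul_vec_of_ne_zero hu0 hcol))
  refine ⟨4, vecMulVec u (V 0), vecMulVec u (V 1), 1 / 2, 10, 1 / 2, 0, 0, by norm_num, by norm_num,
    by norm_num, ?_, hcols 0, hcols 1, hvoc, rfl, fun h _ WO WV WK WQ => ⟨hattn h WO WV WK WQ, ?_⟩⟩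
  · convert hsep using 1
    ext i : 1
    fin_cases i <;> rfl
  · exact fun r δ _ hδ =>
      not_contextualMapping_of_apply_eq (i := 0) (j := 1) hδ.le hvoc (hattn h WO WV WK WQ)

theorem statement0 (d s : ℕ) (hd : 1 ≤ d) (hs : 1 ≤ s) :
    ∃ (n : ℕ) (X1 X2 : Matrix (Fin d) (Fin n) ℝ) (rmin rmax ε : ℝ) (k l : Fin n),
      0 < rmin ∧ rmin < rmax ∧ 0 < ε ∧
      TokSep rmin rmax ε ![X1, X2] ∧
      (∀ k' l' : Fin n, k' ≠ l' → (fun t => X1 t k') ≠ (fun t => X1 t l')) ∧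
      (∀ k' l' : Fin n, k' ≠ l' → (fun t => X2 t k') ≠ (fun t => X2 t l')) ∧
      vocab X1 ≠ vocab X2 ∧
      (fun t => X1 t k) = (fun t => X2 t l) ∧
      ∀ (h : ℕ), 1 ≤ h →
        ∀ (WO : Fin h → Matrix (Fin d) (Fin s) ℝ)
          (WV WK WQ : Fin h → Matrix (Fin s) (Fin d) ℝ),
          (∀ t, attnH WO WV WK WQ X1 t k = attnH WO WV WK WQ X2 t l) ∧
          ∀ r δ : ℝ, 0 < r → 0 < δ →
            ¬ ContextualMapping ![X1, X2] (attnH WO WV WK WQ) r δ :=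
  statement0_general d s hd
end
end

section
/- Let n ≥ 2 and let a⁽¹⁾,…,a⁽ᵐ⁾ ∈ ℝⁿ be vectors such that (i) |a⁽ⁱ⁾_k| < r for all i ∈ [m], k ∈ [n]; (ii) |a⁽ⁱ⁾_k − a⁽ʲ⁾_l| > δ for all i, j ∈ [m] and k, l ∈ [n] with a⁽ⁱ⁾_k ≠ a⁽ʲ⁾_l; (iii) no vector a⁽ⁱ⁾ has a duplicate element; and (iv) δ > 2 log n + 3. Then for all i, j ∈ [m]: |Boltz(a⁽ⁱ⁾)| ≤ r, and if a⁽ⁱ⁾ is not a permutation of a⁽ʲ⁾ (in particular if a⁽ⁱ⁾ ≠ a⁽ʲ⁾ after sorting into decreasing order), then |Boltz(a⁽ⁱ⁾) − Boltz(a⁽ʲ⁾)| > (log n)² e^{−2r}. -/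
open scoped BigOperators Classical
open Matrix

noncomputable section

/-!
Boltz is the softmax-weighted mean of the entries, so for injective vectors it depends only on the
set of entries, and for a finite set `S` and any `c`, `(∑ e^u) (c - Boltz S) = ∑ e^u (c - u)`.
Let `v` be the largest value lying in exactly one of the two sets `X`, `Y`, say in `X`.

If `v` is the maximum of `X ∪ Y`, it is isolated by `δ`, so `Boltz X ≥ v - n δ e^{-δ}` while
`Boltz Y ≤ v - δ`. Otherwise both sets share the set `P` of elements above `v`, including the top
`M`, and `Boltz P ≈ M`. Adding the elements `≤ v` to `P` lowers the mean by at least about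
`t e^{-t}` (with `t = M - v`) for `X`, which contains `v`, but by at most `2 n t e^{-t} e^{-δ}` for
`Y`, whose elements outside `P` lie below `v - δ`. As `δ > 2 log n + 3` gives `n e^{-δ} ≤ 1/8`,
the two Boltzmann values differ by at least `t e^{-t} / 2 ≥ r e^{-2r}`, since `1 ≤ t ≤ 2r`.
Finally, `n` points `δ` apart in `(-r, r)` give `(n - 1) δ < 2r`, hence `(log n)^2 < r`.
-/

open Finset Real
open scoped symmDiff

def boltzSet (S : Finset ℝ) : ℝ := (∑ u ∈ S, u * exp u) / ∑ u ∈ S, exp u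

theorem boltz_eq_boltzSet_image {n : ℕ} {x : Fin n → ℝ} (hx : Function.Injective x) :
    boltz x = boltzSet (univ.image x) := by
  rw [boltzSet, sum_image hx.injOn, sum_image hx.injOn, boltz, sum_div]
  simp only [softmax, mul_div_assoc]

theorem sum_exp_pos {S : Finset ℝ} (hS : S.Nonempty) : 0 < ∑ u ∈ S, exp u :=
  sum_pos (fun u _ => exp_pos u) hS

theorem sum_exp_mul_sub_boltzSet {S : Finset ℝ} (hS : S.Nonempty) (c : ℝ) :
    ∑ u ∈ S, exp u * (c - u) = (∑ u ∈ S, exp u) * (c - boltzSet S) := by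
  rw [boltzSet, mul_sub, mul_div_cancel₀ _ (sum_exp_pos hS).ne', sum_mul, ← sum_sub_distrib]
  exact sum_congr rfl fun u _ => by ring

theorem boltzSet_le {S : Finset ℝ} (hS : S.Nonempty) {c : ℝ} (h : ∀ u ∈ S, u ≤ c) :
    boltzSet S ≤ c := by
  have key := sum_exp_mul_sub_boltzSet hS c
  have : 0 ≤ ∑ u ∈ S, exp u * (c - u) :=
    sum_nonneg fun u hu => mul_nonneg (exp_pos u).le (sub_nonneg.2 (h u hu))
  nlinarith [sum_exp_pos hS]

theorem le_boltzSet {S : Finset ℝ} (hS : S.Nonempty) {c : ℝ} (h : ∀ u ∈ S, c ≤ u) :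
    c ≤ boltzSet S := by
  have key := sum_exp_mul_sub_boltzSet hS c
  have : ∑ u ∈ S, exp u * (c - u) ≤ 0 :=
    sum_nonpos fun u hu => mul_nonpos_of_nonneg_of_nonpos (exp_pos u).le (sub_nonpos.2 (h u hu))
  nlinarith [sum_exp_pos hS]

theorem abs_boltzSet_le {S : Finset ℝ} (hS : S.Nonempty) {r : ℝ} (h : ∀ u ∈ S, |u| ≤ r) :
    |boltzSet S| ≤ r :=
  abs_le.2 ⟨le_boltzSet hS fun u hu => (abs_le.1 (h u hu)).1,
    boltzSet_le hS fun u hu => (abs_le.1 (h u hu)).2⟩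

theorem boltzSet_sub_boltzSet_union_mul {A C : Finset ℝ} (hA : A.Nonempty) (hAC : Disjoint A C) :
    (boltzSet A - boltzSet (A ∪ C)) * ∑ u ∈ A ∪ C, exp u =
      ∑ u ∈ C, exp u * (boltzSet A - u) := by
  rw [mul_comm, ← sum_exp_mul_sub_boltzSet (hA.mono subset_union_left), sum_union hAC,
    sum_exp_mul_sub_boltzSet hA, sub_self, mul_zero, zero_add]

theorem mul_exp_neg_le_mul_exp_neg {d x : ℝ} (hd : 1 ≤ d) (hdx : d ≤ x) :
    x * exp (-x) ≤ d * exp (-d) := by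
  have hx : x ≤ d * exp (x - d) := by nlinarith [add_one_le_exp (x - d)]
  calc x * exp (-x) ≤ d * exp (x - d) * exp (-x) := by gcongr
    _ = d * exp (-d) := by rw [mul_assoc, ← exp_add]; ring_nf

theorem sum_exp_mul_sub_le {S : Finset ℝ} {c d : ℝ} (hd : 1 ≤ d) (h : ∀ u ∈ S, u ≤ c - d) :
    ∑ u ∈ S, exp u * (c - u) ≤ #S * (d * exp (c - d)) := by
  rw [← nsmul_eq_mul]
  refine sum_le_card_nsmul _ _ _ fun u hu => ?_
  have := mul_exp_neg_le_mul_exp_neg hd (le_sub_comm.1 (h u hu))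
  calc exp u * (c - u) = exp c * ((c - u) * exp (-(c - u))) := by
        rw [mul_left_comm, ← exp_add]; ring_nf
    _ ≤ exp c * (d * exp (-d)) := by gcongr
    _ = d * exp (c - d) := by rw [mul_left_comm, ← exp_add]; ring_nf

theorem mul_exp_neg_two_mul_lt (x : ℝ) : x * exp (-2 * x) < 1 / 2 := by
  have h1 := add_one_le_exp (2 * x)
  have h2 : exp (2 * x) * exp (-2 * x) = 1 := by rw [← exp_add]; ring_nf; exact exp_zero
  nlinarith [exp_pos (-2 * x)]

section IsolatedMax

variable {S : Finset ℝ} {M δ : ℝ} (hM : M ∈ S) (hiso : ∀ u ∈ S, u ≠ M → u ≤ M - δ)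
include hM hiso

theorem sum_exp_le_of_isolated_max : ∑ u ∈ S, exp u ≤ exp M + #S * exp (M - δ) := by
  rw [← add_sum_erase S _ hM, ← nsmul_eq_mul]
  gcongr
  calc ∑ u ∈ S.erase M, exp u ≤ #(S.erase M) • exp (M - δ) :=
        sum_le_card_nsmul _ _ _ fun u hu =>
          exp_le_exp.2 (hiso u (mem_of_mem_erase hu) (ne_of_mem_erase hu))
    _ ≤ #S • exp (M - δ) := nsmul_le_nsmul_left (exp_pos _).le card_erase_le

theorem sub_boltzSet_le_of_isolated_max (hδ : 1 ≤ δ) :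
    M - boltzSet S ≤ #S * (δ * exp (-δ)) := by
  have hS : S.Nonempty := ⟨M, hM⟩
  have hle : 0 ≤ M - boltzSet S := sub_nonneg.2 <| boltzSet_le hS fun u hu => by
    rcases eq_or_ne u M with rfl | hne
    · rfl
    · linarith [hiso u hu hne]
  have hsum : (∑ u ∈ S, exp u) * (M - boltzSet S) ≤ #S * (δ * exp (-δ)) * exp M :=
    calc (∑ u ∈ S, exp u) * (M - boltzSet S) = ∑ u ∈ S.erase M, exp u * (M - u) := by
          rw [← sum_exp_mul_sub_boltzSet hS, sum_erase _ (by rw [sub_self, mul_zero])]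
      _ ≤ #(S.erase M) * (δ * exp (M - δ)) := sum_exp_mul_sub_le hδ fun u hu =>
          hiso u (mem_of_mem_erase hu) (ne_of_mem_erase hu)
      _ ≤ #S * (δ * exp (M - δ)) := by gcongr; exact erase_subset M S
      _ = #S * (δ * exp (-δ)) * exp M := by rw [sub_eq_add_neg, exp_add]; ring
  have hZ : exp M ≤ ∑ u ∈ S, exp u := single_le_sum (fun u _ => (exp_pos u).le) hM
  exact le_of_mul_le_mul_right (by nlinarith) (exp_pos M)

end IsolatedMax

theorem mul_exp_le_boltzSet_sub_boltzSet_union_mul {A C : Finset ℝ} (hA : A.Nonempty)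
    (hAC : Disjoint A C) {v K : ℝ} (hv : v ∈ C) (hC : ∀ u ∈ C, u ≤ v) (hvA : v ≤ boltzSet A)
    (hK : ∑ u ∈ A ∪ C, exp u ≤ K) :
    exp v * (boltzSet A - v) ≤ (boltzSet A - boltzSet (A ∪ C)) * K := by
  have key := boltzSet_sub_boltzSet_union_mul hA hAC
  have hterm : exp v * (boltzSet A - v) ≤ ∑ u ∈ C, exp u * (boltzSet A - u) :=
    single_le_sum (f := fun u => exp u * (boltzSet A - u))
      (fun u hu => mul_nonneg (exp_pos u).le (by linarith [hC u hu])) hv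
  have hpos : 0 ≤ exp v * (boltzSet A - v) := mul_nonneg (exp_pos v).le (by linarith)
  have hZ := sum_exp_pos (hA.mono subset_union_left : (A ∪ C).Nonempty)
  have hdiff : 0 ≤ boltzSet A - boltzSet (A ∪ C) := by nlinarith
  nlinarith

theorem boltzSet_sub_boltzSet_union_mul_le {A C : Finset ℝ} (hA : A.Nonempty)
    (hAC : Disjoint A C) {c d K : ℝ} (hd : 1 ≤ d) (hC : ∀ u ∈ C, u ≤ c - d) (hAc : boltzSet A ≤ c)
    (hK0 : 0 ≤ K) (hK : K ≤ ∑ u ∈ A ∪ C, exp u) :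
    (boltzSet A - boltzSet (A ∪ C)) * K ≤ #C * (d * exp (c - d)) := by
  have key := boltzSet_sub_boltzSet_union_mul hA hAC
  have hsum : ∑ u ∈ C, exp u * (boltzSet A - u) ≤ ∑ u ∈ C, exp u * (c - u) := by gcongr
  have hbound := sum_exp_mul_sub_le hd hC
  have hnonneg : 0 ≤ (#C : ℝ) * (d * exp (c - d)) := by positivity
  rcases le_or_gt (boltzSet A - boltzSet (A ∪ C)) 0 with hneg | hpos <;> nlinarith

theorem le_sub_of_pairwise_lt {U : Set ℝ} {δ u w : ℝ} (hU : U.Pairwise fun u w => δ < |u - w|)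
    (hu : u ∈ U) (hw : w ∈ U) (huw : u < w) : u ≤ w - δ := by
  have : δ < |u - w| := hU hu hw huw.ne
  rw [abs_of_neg (sub_neg.2 huw)] at this
  linarith

theorem card_sub_one_mul_le_of_pairwise {S : Finset ℝ} (hS : S.Nonempty) {δ a b : ℝ}
    (hsep : (S : Set ℝ).Pairwise fun u w => δ < |u - w|) (hab : (S : Set ℝ) ⊆ Set.Icc a b) :
    (#S - 1 : ℝ) * δ ≤ b - a := by
  induction S using Finset.induction_on_max generalizing b with
  | empty => exact absurd hS not_nonempty_empty
  | insert M s hlt ih =>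
    have hMb := (hab (mem_insert_self M s)).2
    rcases s.eq_empty_or_nonempty with rfl | hs
    · simp only [insert_empty, card_singleton, Nat.cast_one, sub_self, zero_mul, sub_nonneg]
      exact (hab (mem_insert_self M ∅)).1.trans hMb
    · have hsub : (s : Set ℝ) ⊆ Set.Icc a (M - δ) := fun u hu =>
        ⟨(hab (mem_insert_of_mem hu)).1,
          le_sub_of_pairwise_lt hsep (mem_insert_of_mem hu) (mem_insert_self M s) (hlt u hu)⟩
      have := ih hs (hsep.mono (by simp)) hsub
      rw [card_insert_of_notMem fun h => (hlt M h).false]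
      push_cast
      linarith

theorem log_sq_lt_of_pairwise {n : ℕ} (hn : 2 ≤ n) {X : Finset ℝ} (hX : #X = n) {r δ : ℝ}
    (hr : ∀ u ∈ X, |u| < r) (hsep : (X : Set ℝ).Pairwise fun u w => δ < |u - w|)
    (hδ : 2 * log n < δ) : log n ^ 2 < r := by
  have hX0 : X.Nonempty := card_pos.1 (by omega)
  have hspread := card_sub_one_mul_le_of_pairwise hX0 hsep (a := X.min' hX0) (b := X.max' hX0)
    fun u hu => ⟨min'_le X u hu, le_max' X u hu⟩
  have hmax := abs_lt.1 (hr _ (max'_mem X hX0))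
  have hmin := abs_lt.1 (hr _ (min'_mem X hX0))
  have hn2 : (2 : ℝ) ≤ n := by exact_mod_cast hn
  have hlog0 : 0 < log n := log_pos (by linarith)
  have hlog := log_le_sub_one_of_pos (by linarith : (0 : ℝ) < n)
  rw [hX] at hspread
  nlinarith [mul_le_mul_of_nonneg_left hlog hlog0.le]

theorem nat_mul_exp_neg_le {n : ℕ} (hn : 2 ≤ n) {δ : ℝ} (hδ : 2 * log n + 3 < δ) :
    n * exp (-δ) ≤ 1 / 8 := by
  have hn2 : (2 : ℝ) ≤ n := by exact_mod_cast hn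
  have hsq : exp (-δ) * n ^ 2 ≤ exp (-3) := by
    rw [← exp_log (by linarith : (0 : ℝ) < n), ← exp_nat_mul, ← exp_add]
    exact exp_le_exp.2 (by push_cast; linarith)
  have h3 : exp (-3) ≤ 1 / 4 := by
    rw [exp_neg, inv_le_comm₀ (exp_pos 3) (by norm_num)]
    linarith [add_one_le_exp 3]
  nlinarith [exp_pos (-δ)]

section TailBounds

variable {n : ℕ} {δ : ℝ} (hδ : 1 ≤ δ) (hη : n * exp (-δ) ≤ 1 / 8)
include hδ hη

theorem mul_exp_neg_le_boltzSet_filter_sub_boltzSet {X : Finset ℝ} (hXn : #X ≤ n) {v M : ℝ}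
    (hvX : v ∈ X) (hMX : M ∈ X) (hvM : v < M) (hiso : ∀ u ∈ X, u ≠ M → u ≤ M - δ) :
    7 / 9 * ((M - v) * exp (-(M - v))) ≤ boltzSet (X.filter (v < ·)) - boltzSet X := by
  set t := M - v with ht
  set P := X.filter (v < ·)
  have hMP : M ∈ P := mem_filter.2 ⟨hMX, hvM⟩
  have hP : P.Nonempty := ⟨M, hMP⟩
  have hXsplit : P ∪ X.filter (¬ v < ·) = X := filter_union_filter_not_eq _ _
  have htδ : δ ≤ t := by linarith [hiso v hvX hvM.ne]
  have hBP : M - t / 8 ≤ boltzSet P := by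
    have hcard : (#P : ℝ) ≤ n := by exact_mod_cast (card_filter_le _ _).trans hXn
    have := sub_boltzSet_le_of_isolated_max hMP (fun u hu => hiso u (mem_filter.1 hu).1) hδ
    nlinarith [mul_le_mul_of_nonneg_right hcard (by positivity : 0 ≤ δ * exp (-δ))]
  have hZX : ∑ u ∈ X, exp u ≤ 9 / 8 * exp M := by
    have := sum_exp_le_of_isolated_max hMX hiso
    have hcard : (#X : ℝ) ≤ n := by exact_mod_cast hXn
    rw [sub_eq_add_neg, exp_add] at this
    nlinarith [mul_le_mul_of_nonneg_right hcard (by positivity : 0 ≤ exp M * exp (-δ)),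
      mul_le_mul_of_nonneg_left hη (exp_pos M).le]
  have hlow := mul_exp_le_boltzSet_sub_boltzSet_union_mul hP (disjoint_filter_filter_not _ _ _)
    (mem_filter.2 ⟨hvX, lt_irrefl v⟩) (fun u hu => le_of_not_gt (mem_filter.1 hu).2)
    (by linarith) (hXsplit ▸ hZX)
  rw [hXsplit, show exp v = exp M * exp (-t) by rw [← exp_add, ht]; ring_nf] at hlow
  have h : exp (-t) * (boltzSet P - v) ≤ (boltzSet P - boltzSet X) * (9 / 8) :=
    le_of_mul_le_mul_left (a := exp M) (by linarith) (exp_pos M)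
  nlinarith [mul_le_mul_of_nonneg_left (show 7 / 8 * t ≤ boltzSet P - v by linarith)
    (exp_pos (-t)).le]

theorem boltzSet_filter_sub_boltzSet_le_mul_exp_neg {Y : Finset ℝ} (hYn : #Y ≤ n) {v M : ℝ}
    (hMY : M ∈ Y) (hMmax : ∀ u ∈ Y, u ≤ M) (hδM : δ ≤ M - v)
    (hYv : ∀ u ∈ Y, u ≤ v → u ≤ v - δ) :
    boltzSet (Y.filter (v < ·)) - boltzSet Y ≤ (M - v) * exp (-(M - v)) / 4 := by
  set t := M - v with ht
  set P := Y.filter (v < ·)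
  have hP : P.Nonempty := ⟨M, mem_filter.2 ⟨hMY, by linarith⟩⟩
  have hYsplit : P ∪ Y.filter (¬ v < ·) = Y := filter_union_filter_not_eq _ _
  have hZY : exp M ≤ ∑ u ∈ Y, exp u := single_le_sum (fun u _ => (exp_pos u).le) hMY
  have hup := boltzSet_sub_boltzSet_union_mul_le hP (disjoint_filter_filter_not _ _ _)
    (c := M) (d := t + δ) (by linarith) (fun u hu => by
      obtain ⟨huY, huv⟩ := mem_filter.1 hu
      linarith [hYv u huY (le_of_not_gt huv)])
    (boltzSet_le hP fun u hu => hMmax u (mem_filter.1 hu).1) (exp_pos M).le (hYsplit ▸ hZY)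
  rw [hYsplit, show exp (M - (t + δ)) = exp M * (exp (-t) * exp (-δ)) by
    rw [← exp_add, ← exp_add]; ring_nf] at hup
  have hcard : (#(Y.filter (¬ v < ·)) : ℝ) ≤ n := by
    exact_mod_cast (card_filter_le _ _).trans hYn
  have htE : 0 ≤ t * exp (-t) := mul_nonneg (by linarith) (exp_pos (-t)).le
  calc boltzSet P - boltzSet Y ≤ #(Y.filter (¬ v < ·)) * ((t + δ) * (exp (-t) * exp (-δ))) :=
        le_of_mul_le_mul_left (a := exp M) (by linarith) (exp_pos M)
    _ ≤ n * (2 * t * (exp (-t) * exp (-δ))) :=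
        mul_le_mul hcard (by gcongr; linarith) (mul_nonneg (by linarith) (by positivity))
          n.cast_nonneg
    _ = 2 * (t * exp (-t)) * (n * exp (-δ)) := by ring
    _ ≤ 2 * (t * exp (-t)) * (1 / 8) := by gcongr
    _ = t * exp (-t) / 4 := by ring

end TailBounds

section Separated

variable {n : ℕ} {X Y : Finset ℝ} {δ v : ℝ} (hXn : #X ≤ n) (hδ : 1 ≤ δ)
  (hη : n * exp (-δ) ≤ 1 / 8)
  (hsep : ((X ∪ Y : Finset ℝ) : Set ℝ).Pairwise fun u w => δ < |u - w|)
  (hvX : v ∈ X) (hvY : v ∉ Y) (hagree : ∀ u, v < u → (u ∈ X ↔ u ∈ Y))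
include hXn hδ hη hsep hvX hvY hagree

theorem le_boltzSet_sub_boltzSet_of_max_mem (hY : Y.Nonempty) (hYv : ∀ u ∈ Y, u ≤ v) :
    7 / 8 * δ ≤ boltzSet X - boltzSet Y := by
  have hlt : ∀ u ∈ Y, u < v := fun u hu => (hYv u hu).lt_of_ne fun h => hvY (h ▸ hu)
  have hX : ∀ u ∈ X, u ≠ v → u ≤ v - δ := fun u hu hne =>
    le_sub_of_pairwise_lt hsep (mem_union_left _ hu) (mem_union_left _ hvX) <|
      (le_of_not_gt fun h => (hlt u ((hagree u h).1 hu)).not_gt h).lt_of_ne hne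
  have hBX := sub_boltzSet_le_of_isolated_max hvX hX hδ
  have hBY := boltzSet_le hY fun u hu =>
    le_sub_of_pairwise_lt hsep (mem_union_right _ hu) (mem_union_left _ hvX) (hlt u hu)
  have hcard : (#X : ℝ) * exp (-δ) ≤ 1 / 8 := le_trans (by gcongr) hη
  nlinarith

theorem mul_exp_neg_le_boltzSet_sub_boltzSet_of_max_common (hYn : #Y ≤ n) {M : ℝ} (hMX : M ∈ X)
    (hMmax : ∀ u ∈ X, u ≤ M) (hvM : v < M) :
    (M - v) * exp (-(M - v)) / 2 ≤ boltzSet Y - boltzSet X := by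
  have hYP : Y.filter (v < ·) = X.filter (v < ·) := by
    ext u
    simp only [mem_filter]
    exact ⟨fun h => ⟨(hagree u h.2).2 h.1, h.2⟩, fun h => ⟨(hagree u h.2).1 h.1, h.2⟩⟩
  have hiso : ∀ u ∈ X, u ≠ M → u ≤ M - δ := fun u hu hne =>
    le_sub_of_pairwise_lt hsep (mem_union_left _ hu) (mem_union_left _ hMX)
      ((hMmax u hu).lt_of_ne hne)
  have hMY : M ∈ Y := (hagree M hvM).1 hMX
  have hYmax : ∀ u ∈ Y, u ≤ M := fun u hu => by
    by_contra! h
    exact (hMmax u ((hagree u (hvM.trans h)).2 hu)).not_gt h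
  have hYv : ∀ u ∈ Y, u ≤ v → u ≤ v - δ := fun u hu huv =>
    le_sub_of_pairwise_lt hsep (mem_union_right _ hu) (mem_union_left _ hvX)
      (huv.lt_of_ne fun h => hvY (h ▸ hu))
  have hlow := mul_exp_neg_le_boltzSet_filter_sub_boltzSet hδ hη hXn hvX hMX hvM hiso
  have hup := boltzSet_filter_sub_boltzSet_le_mul_exp_neg hδ hη hYn hMY hYmax
    (by linarith [hiso v hvX hvM.ne]) hYv
  rw [hYP] at hup
  linarith [mul_nonneg (by linarith [hδ, hiso v hvX hvM.ne] : 0 ≤ M - v) (exp_pos (-(M - v))).le]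

theorem mul_exp_neg_two_mul_le_abs_boltzSet_sub (hYn : #Y ≤ n) (hY : Y.Nonempty) {r : ℝ}
    (hr : ∀ u ∈ X ∪ Y, |u| < r) : r * exp (-2 * r) ≤ |boltzSet X - boltzSet Y| := by
  by_cases hcommon : ∃ w ∈ Y, v < w
  · obtain ⟨w, hwY, hvw⟩ := hcommon
    have hX : X.Nonempty := ⟨v, hvX⟩
    have hMX : X.max' hX ∈ X := max'_mem X hX
    have hvM : v < X.max' hX := hvw.trans_le (le_max' X w ((hagree w hvw).2 hwY))
    have hδM := le_sub_of_pairwise_lt hsep (mem_union_left _ hvX) (mem_union_left _ hMX) hvM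
    have h2r : X.max' hX - v ≤ 2 * r := by
      linarith [abs_lt.1 (hr _ (mem_union_left _ hMX)), abs_lt.1 (hr v (mem_union_left _ hvX))]
    have hdecay := mul_exp_neg_le_mul_exp_neg (by linarith) h2r
    have hdrop := mul_exp_neg_le_boltzSet_sub_boltzSet_of_max_common hXn hδ hη hsep hvX hvY
      hagree hYn hMX (fun u hu => le_max' X u hu) hvM
    rw [abs_sub_comm, neg_mul]
    linarith [le_abs_self (boltzSet Y - boltzSet X)]
  · push Not at hcommon
    have := le_boltzSet_sub_boltzSet_of_max_mem hXn hδ hη hsep hvX hvY hagree hY hcommon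
    linarith [mul_exp_neg_two_mul_lt r, le_abs_self (boltzSet X - boltzSet Y)]

end Separated

theorem exists_max_symmDiff {X Y : Finset ℝ} (hXY : X ≠ Y) :
    ∃ v, (v ∈ X ∧ v ∉ Y ∨ v ∈ Y ∧ v ∉ X) ∧ ∀ u, v < u → (u ∈ X ↔ u ∈ Y) := by
  have hne : (X ∆ Y).Nonempty := symmDiff_nonempty.2 hXY
  refine ⟨(X ∆ Y).max' hne, mem_symmDiff.1 (max'_mem _ hne), fun u hu => ?_⟩
  by_contra h
  exact (le_max' _ u (mem_symmDiff.2 (by tauto))).not_gt hu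

theorem log_sq_mul_exp_lt_abs_boltzSet_sub {n : ℕ} (hn : 2 ≤ n) {X Y : Finset ℝ} (hX : #X = n)
    (hY : #Y = n) (hXY : X ≠ Y) {r δ : ℝ} (hr : ∀ u ∈ X ∪ Y, |u| < r)
    (hsep : ((X ∪ Y : Finset ℝ) : Set ℝ).Pairwise fun u w => δ < |u - w|)
    (hδ : 2 * log n + 3 < δ) :
    log n ^ 2 * exp (-2 * r) < |boltzSet X - boltzSet Y| := by
  have hlog : log n ^ 2 < r :=
    log_sq_lt_of_pairwise hn hX (fun u hu => hr u (mem_union_left _ hu))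
      (hsep.mono (by simp)) (by linarith)
  have hδ1 : 1 ≤ δ := by linarith [log_nonneg (by exact_mod_cast (by omega : 1 ≤ n) : (1 : ℝ) ≤ n)]
  have hη := nat_mul_exp_neg_le hn hδ
  have hX0 : X.Nonempty := card_pos.1 (by omega)
  have hY0 : Y.Nonempty := card_pos.1 (by omega)
  obtain ⟨v, ⟨hvX, hvY⟩ | ⟨hvY, hvX⟩, hagree⟩ := exists_max_symmDiff hXY
  · calc log n ^ 2 * exp (-2 * r) < r * exp (-2 * r) := by gcongr
      _ ≤ _ := mul_exp_neg_two_mul_le_abs_boltzSet_sub hX.le hδ1 hη hsep hvX hvY hagree hY.le hY0 hr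
  · calc log n ^ 2 * exp (-2 * r) < r * exp (-2 * r) := by gcongr
      _ ≤ _ := by
        rw [abs_sub_comm]
        rw [union_comm] at hsep hr
        exact mul_exp_neg_two_mul_le_abs_boltzSet_sub hY.le hδ1 hη hsep hvY hvX
          (fun u hu => (hagree u hu).symm) hX.le hX0 hr

theorem exists_perm_eq_comp_of_range_eq {ι α : Type*} {x y : ι → α} (hx : Function.Injective x)
    (hy : Function.Injective y) (h : Set.range x = Set.range y) :
    ∃ σ : Equiv.Perm ι, x = y ∘ σ :=
  ⟨(Equiv.ofInjective x hx).trans ((Equiv.setCongr h).trans (Equiv.ofInjective y hy).symm),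
    funext fun k => by simp [Equiv.apply_ofInjective_symm]⟩

theorem statement2 (n m : ℕ) (hn : 2 ≤ n) (r δ : ℝ)
    (a : Fin m → Fin n → ℝ)
    (hbound : ∀ i k, |a i k| < r)
    (hsep : ∀ i j k l, a i k ≠ a j l → δ < |a i k - a j l|)
    (hnodup : ∀ i, ∀ k l : Fin n, k ≠ l → a i k ≠ a i l)
    (hδ : 2 * Real.log n + 3 < δ) :
    ∀ i j : Fin m,
      |boltz (a i)| ≤ r ∧
      ((¬ ∃ σ : Equiv.Perm (Fin n), a i = a j ∘ σ) →
        (Real.log n) ^ 2 * Real.exp (-2 * r) < |boltz (a i) - boltz (a j)|) := by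
  intro i j
  have hinj : ∀ i, Function.Injective (a i) := fun i k l h =>
    by_contra fun hkl => hnodup i k l hkl h
  have hentry : ∀ u ∈ univ.image (a i) ∪ univ.image (a j), ∃ i' k, a i' k = u := by
    simp only [mem_union, mem_image, mem_univ, true_and]
    rintro u (⟨k, rfl⟩ | ⟨k, rfl⟩) <;> exact ⟨_, k, rfl⟩
  have hcard : ∀ i, #(univ.image (a i)) = n := fun i => by
    rw [card_image_of_injective _ (hinj i), card_univ, Fintype.card_fin]
  rw [boltz_eq_boltzSet_image (hinj i), boltz_eq_boltzSet_image (hinj j)]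
  refine ⟨abs_boltzSet_le (card_pos.1 (by rw [hcard i]; omega)) fun u hu => ?_, fun hperm => ?_⟩
  · obtain ⟨i', k, rfl⟩ := hentry u (mem_union_left _ hu)
    exact (hbound i' k).le
  have hXY : univ.image (a i) ≠ univ.image (a j) := fun h => hperm <|
    exists_perm_eq_comp_of_range_eq (hinj i) (hinj j) <| by
      simpa using congrArg ((↑) : Finset ℝ → Set ℝ) h
  refine log_sq_mul_exp_lt_abs_boltzSet_sub hn (hcard i) (hcard j) hXY (fun u hu => ?_)
    (fun u hu w hw huw => ?_) hδ
  · obtain ⟨i', k, rfl⟩ := hentry u hu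
    exact hbound i' k
  · obtain ⟨i', k, rfl⟩ := hentry u hu
    obtain ⟨j', l, rfl⟩ := hentry w hw
    exact hsep i' j' k l huw

end
end

section
/- For every n ≥ 1, every i ∈ [n], and every a ∈ ℝⁿ, the partial derivative of the Boltzmann operator with respect to a_i equals ∂Boltz(a)/∂a_i = p_i · (1 + log p_i + 𝒮(p)), where p = σ_S[a]. -/
open scoped BigOperators Classical
open Matrix

noncomputable section

/-! Writing `Boltz(a) = (∑ⱼ aⱼ e^{aⱼ}) / ∑ⱼ e^{aⱼ}`, the quotient rule gives
`∂ᵢ Boltz(a) = pᵢ (1 + aᵢ - Boltz(a))`. Since `log pᵢ = aᵢ - LSE(a)` and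
`𝒮(p) = LSE(a) - Boltz(a)`, the term `aᵢ - Boltz(a)` equals `log pᵢ + 𝒮(p)`. -/

open Real

lemma sum_exp_pos_s9 {ι : Type*} [Fintype ι] [Nonempty ι] (a : ι → ℝ) : 0 < ∑ j, exp (a j) :=
  Finset.sum_pos (fun j _ => exp_pos (a j)) Finset.univ_nonempty

lemma hasDerivAt_sum_comp_update {ι : Type*} [Fintype ι] [DecidableEq ι] (a : ι → ℝ) (i : ι)
    {h : ℝ → ℝ} {h' : ℝ} (hh : HasDerivAt h h' (a i)) :
    HasDerivAt (fun x => ∑ j, h (Function.update a i x j)) h' (a i) := by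
  have hsum : ∀ x, ∑ j, h (Function.update a i x j) = h x + ∑ j ∈ Finset.univ \ {i}, h (a j) :=
    fun x => by
      simp only [← Function.comp_apply (f := h), Function.comp_update,
        Finset.sum_update_of_mem (Finset.mem_univ i)]
  simpa only [hsum] using hh.add_const _

lemma boltz_eq_div {n : ℕ} (a : Fin n → ℝ) :
    boltz a = (∑ j, a j * exp (a j)) / ∑ j, exp (a j) := by
  simp only [boltz, softmax, mul_div_assoc', Finset.sum_div]

lemma sum_softmax {n : ℕ} [Nonempty (Fin n)] (a : Fin n → ℝ) : ∑ j, softmax a j = 1 := by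
  simp only [softmax, ← Finset.sum_div, div_self (sum_exp_pos_s9 a).ne']

lemma log_softmax {n : ℕ} (a : Fin n → ℝ) (i : Fin n) :
    log (softmax a i) = a i - logSumExp a := by
  have : Nonempty (Fin n) := ⟨i⟩
  rw [softmax, log_div (exp_ne_zero _) (sum_exp_pos_s9 a).ne', log_exp, logSumExp]

lemma entS_softmax {n : ℕ} [Nonempty (Fin n)] (a : Fin n → ℝ) :
    entS (softmax a) = logSumExp a - boltz a := by
  have hterm : ∀ j, softmax a j * log (softmax a j) =
      a j * softmax a j - logSumExp a * softmax a j := fun j => by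
    rw [log_softmax]; ring
  simp only [entS, boltz, hterm, Finset.sum_sub_distrib, ← Finset.mul_sum, sum_softmax]
  ring

lemma hasDerivAt_boltz_update {n : ℕ} (a : Fin n → ℝ) (i : Fin n) :
    HasDerivAt (fun x => boltz (Function.update a i x))
      (softmax a i * (1 + a i - boltz a)) (a i) := by
  have : Nonempty (Fin n) := ⟨i⟩
  have hnum : HasDerivAt (fun x => ∑ j, Function.update a i x j * exp (Function.update a i x j))
      ((1 + a i) * exp (a i)) (a i) :=
    hasDerivAt_sum_comp_update (h := fun y => y * exp y) a i
      (((hasDerivAt_id' (a i)).fun_mul (hasDerivAt_exp (a i))).congr_deriv (by ring))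
  have hden : HasDerivAt (fun x => ∑ j, exp (Function.update a i x j)) (exp (a i)) (a i) :=
    hasDerivAt_sum_comp_update a i (hasDerivAt_exp (a i))
  have hden_ne : ∑ j, exp (Function.update a i (a i) j) ≠ 0 := by
    rw [Function.update_eq_self]; exact (sum_exp_pos_s9 a).ne'
  simp only [boltz_eq_div]
  refine (hnum.fun_div hden hden_ne).congr_deriv ?_
  rw [Function.update_eq_self, softmax]
  field_simp

theorem statement9_general (n : ℕ) (i : Fin n) (a : Fin n → ℝ) :
    deriv (fun x => boltz (Function.update a i x)) (a i) =
      softmax a i * (1 + Real.log (softmax a i) + entS (softmax a)) := by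
  have : Nonempty (Fin n) := ⟨i⟩
  rw [(hasDerivAt_boltz_update a i).deriv, log_softmax, entS_softmax]
  ring

theorem statement9 (n : ℕ) (hn : 1 ≤ n) (i : Fin n) (a : Fin n → ℝ) :
    deriv (fun x => boltz (Function.update a i x)) (a i) =
      softmax a i * (1 + Real.log (softmax a i) + entS (softmax a)) :=
  statement9_general n i a

end
end

section
/- Let n ≥ 2 and let a = (a_1,…,a_{n−1}, a_n), b = (b_1,…,b_{n−1}, b_n) ∈ ℝⁿ be such that a_i = b_i for all i ∈ [n−1]. If max_{i ∈ [n−1]} a_i − δ > a_n > b_n for some δ > log n + 3, then Boltz(b) − Boltz(a) > (a_n − b_n) · (δ + a_n − b_n − log n − 1) · e^{b_n} / Σ_{i=1}^n e^{b_i}. -/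
open scoped BigOperators Classical
open Matrix

noncomputable section

open Finset Real

/-! With `A = ∑ e^{aᵢ}` and `T = ∑ aᵢ e^{aᵢ}` over the first `n - 1` coordinates, both operators
are values of `z ↦ (z e^z + T) / (e^z + A)`, at `z = bₙ` and `z = aₙ`. A Gibbs-type inequality gives
`T ≥ A (max aᵢ - log (n - 1)) ≥ A (aₙ + δ - log (n - 1))`, and `e^{aₙ} ≤ A e^{-δ}`. Clearing
denominators, the claim reduces to `(1 + e^{-δ}) u (k + u) < (k + log n - log (n - 1)) (e^u - 1)`
for `u = aₙ - bₙ` and `k = δ - log n > 3`, which follows from `e^u - 1 ≥ u + u² / 2` and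
`e^{-δ} k < 1 / n ≤ log n - log (n - 1)`. -/

theorem exp_sup'_le_sum_exp {α : Type*} (S : Finset α) (hS : S.Nonempty) (c : α → ℝ) :
    exp (S.sup' hS c) ≤ ∑ i ∈ S, exp (c i) := by
  obtain ⟨i, hi, hmax⟩ := S.exists_mem_eq_sup' hS c
  rw [hmax]
  exact single_le_sum (fun j _ => (exp_pos (c j)).le) hi

/- Summing `exp c * (M - c - log k) ≤ exp M / k - exp c`, an instance of `log t ≤ t - 1`,
over the `k` elements of `S`. -/
theorem sum_exp_mul_sup'_sub_log_card_le {α : Type*} (S : Finset α) (hS : S.Nonempty)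
    (c : α → ℝ) :
    (∑ i ∈ S, exp (c i)) * (S.sup' hS c - log #S) ≤ ∑ i ∈ S, c i * exp (c i) := by
  set M := S.sup' hS c
  have hk : (0 : ℝ) < #S := by exact_mod_cast hS.card_pos
  have hterm : ∀ i ∈ S, exp (c i) * (M - log #S) - c i * exp (c i) ≤ exp M / #S - exp (c i) := by
    intro i _
    have hlog := log_le_sub_one_of_pos (show 0 < exp (M - c i) / #S by positivity)
    rw [log_div (exp_pos _).ne' hk.ne', log_exp] at hlog
    have hsplit : exp M = exp (c i) * exp (M - c i) := by rw [← exp_add]; ring_nf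
    rw [hsplit]
    have := mul_le_mul_of_nonneg_left hlog (exp_pos (c i)).le
    linarith [show exp (c i) * (exp (M - c i) / #S - 1)
      = exp (c i) * exp (M - c i) / #S - exp (c i) by ring]
  have hsum := sum_le_sum hterm
  rw [sum_sub_distrib, sum_sub_distrib, ← sum_mul, sum_const, nsmul_eq_mul,
    mul_div_cancel₀ _ hk.ne'] at hsum
  linarith [exp_sup'_le_sum_exp S hS c]

theorem exp_neg_mul_sub_log_lt_log_sub_log {x : ℝ} (hx : 1 < x) (δ : ℝ) :
    exp (-δ) * (δ - log x) < log x - log (x - 1) := by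
  have hx0 : 0 < x := by linarith
  have hmul : (δ - log x) * exp (-(δ - log x)) < 1 := by
    have := add_one_le_exp (δ - log x)
    rw [← lt_div_iff₀ (exp_pos _), exp_neg, div_inv_eq_mul, one_mul]
    linarith
  have hinv : x⁻¹ ≤ log x - log (x - 1) := by
    have := one_sub_inv_le_log_of_pos (show 0 < x / (x - 1) by apply div_pos <;> linarith)
    rw [log_div hx0.ne' (by linarith), inv_div] at this
    linarith [show 1 - (x - 1) / x = x⁻¹ by field_simp; ring]
  calc exp (-δ) * (δ - log x) = (δ - log x) * exp (-(δ - log x)) * x⁻¹ := by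
        rw [show -δ = -(δ - log x) + -log x by ring, exp_add, exp_neg (log x), exp_log hx0]
        ring
    _ < 1 * x⁻¹ := by gcongr
    _ ≤ _ := by rw [one_mul]; exact hinv

theorem one_add_mul_mul_lt_mul_exp_sub_one {k u η lam : ℝ} (hk : 3 < k) (hu : 0 < u)
    (hη₀ : 0 ≤ η) (hη : η ≤ 1 / 2) (hlam : η * k < lam) :
    (1 + η) * u * (k + u) < (k + lam) * (exp u - 1) := by
  have hexp : u + u ^ 2 / 2 ≤ exp u - 1 := by linarith [quadratic_le_exp_of_nonneg hu.le]
  have hlam0 : 0 ≤ lam := by nlinarith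
  calc (1 + η) * u * (k + u) = k * u + (η * k) * u + (1 + η) * u ^ 2 := by ring
    _ < k * u + lam * u + k * u ^ 2 / 2 := by gcongr; nlinarith [pow_pos hu 2]
    _ ≤ (k + lam) * (u + u ^ 2 / 2) := by nlinarith
    _ ≤ (k + lam) * (exp u - 1) := by gcongr

/-- The Boltzmann operator of a vector with one coordinate `z`, when the remaining coordinates
have `∑ exp = A` and `∑ aᵢ exp aᵢ = T`. -/
def blockBoltz (A T z : ℝ) : ℝ := (z * exp z + T) / (exp z + A)

theorem boltz_eq_blockBoltz {n : ℕ} (a : Fin n → ℝ) (L : Fin n) :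
    boltz a = blockBoltz (∑ i ∈ univ.erase L, exp (a i))
      (∑ i ∈ univ.erase L, a i * exp (a i)) (a L) := by
  rw [blockBoltz, add_sum_erase _ (fun i => a i * exp (a i)) (mem_univ L),
    add_sum_erase _ (fun i => exp (a i)) (mem_univ L), sum_div]
  simp only [boltz, softmax, mul_div_assoc]

theorem blockBoltz_sub_blockBoltz_gt {A T x y θ k η : ℝ} (hA : 0 < A) (hyx : y < x)
    (hk : 1 < k) (hT : A * (x + θ) ≤ T) (hx : exp x ≤ A * η)
    (hgrowth : (1 + η) * (x - y) * (k + (x - y)) < θ * (exp (x - y) - 1)) :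
    (x - y) * (k + (x - y) - 1) * (exp y / (exp y + A))
      < blockBoltz A T y - blockBoltz A T x := by
  set u := x - y
  have hu : 0 < u := sub_pos.mpr hyx
  have hexp_x : exp x = exp y * exp u := by rw [← exp_add, add_sub_cancel]
  have hey := exp_pos y
  have hDy : 0 < exp y + A := by positivity
  have hDx : 0 < exp x + A := by positivity
  have hgap : 0 < exp x - exp y := by rw [sub_pos, exp_lt_exp]; exact hyx
  have hnum : (y * exp y + T) * (exp x + A) - (exp y + A) * (x * exp x + T)
      ≥ A * exp y * (θ * (exp u - 1) - u) - u * exp y * exp x := by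
    have hT' := mul_le_mul_of_nonneg_right hT hgap.le
    rw [hexp_x] at hT' ⊢
    linear_combination hT'
  have hcoef : 0 < u * (k + u - 1) * exp y := by
    have : 0 < k + u - 1 := by linarith
    positivity
  have hbound : u * (k + u - 1) * exp y * (exp x + A)
      < (y * exp y + T) * (exp x + A) - (exp y + A) * (x * exp x + T) := by
    have h1 := mul_le_mul_of_nonneg_left hx (mul_pos hu hey).le
    have h2 := mul_le_mul_of_nonneg_left (add_le_add_right hx A) hcoef.le
    have h3 := mul_lt_mul_of_pos_left hgrowth (mul_pos hA hey)
    linear_combination hnum + h1 + h2 + h3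
  rw [blockBoltz, blockBoltz, div_sub_div _ _ hDy.ne' hDx.ne', lt_div_iff₀ (by positivity)]
  calc u * (k + u - 1) * (exp y / (exp y + A)) * ((exp y + A) * (exp x + A))
      = u * (k + u - 1) * exp y * (exp x + A) := by field_simp
    _ < _ := hbound

theorem boltz_sub_boltz_gt {n : ℕ} (a b : Fin n → ℝ) (L : Fin n) (δ : ℝ)
    (hδ : log n + 3 < δ) (heq : ∀ i ∈ univ.erase L, a i = b i) (hne : (univ.erase L).Nonempty)
    (hmax : a L < (univ.erase L).sup' hne a - δ) (hab : b L < a L) :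
    (a L - b L) * (δ + a L - b L - log n - 1) * (exp (b L) / ∑ i, exp (b i))
      < boltz b - boltz a := by
  set A := ∑ i ∈ univ.erase L, exp (a i)
  set T := ∑ i ∈ univ.erase L, a i * exp (a i)
  have hA : 0 < A := sum_pos (fun i _ => exp_pos (a i)) hne
  have hcard : (#(univ.erase L) : ℝ) = n - 1 := by
    rw [card_erase_of_mem (mem_univ L), card_univ, Fintype.card_fin,
      Nat.cast_sub (Fin.pos L), Nat.cast_one]
  have hn : (1 : ℝ) < n := by
    have := hne.card_pos
    rw [← Nat.cast_pos (α := ℝ), hcard] at this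
    linarith
  have hA_b : ∑ i ∈ univ.erase L, exp (b i) = A := sum_congr rfl fun i hi => by rw [heq i hi]
  have hT_b : ∑ i ∈ univ.erase L, b i * exp (b i) = T :=
    sum_congr rfl fun i hi => by rw [heq i hi]
  have hZ_b : ∑ i, exp (b i) = exp (b L) + A := by
    rw [← add_sum_erase _ _ (mem_univ L), hA_b]
  have hT : A * (a L + (δ - log (n - 1))) ≤ T := by
    have := sum_exp_mul_sup'_sub_log_card_le _ hne a
    rw [hcard] at this
    exact le_trans (mul_le_mul_of_nonneg_left (by linarith) hA.le) this
  have hx : exp (a L) ≤ A * exp (-δ) := by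
    calc exp (a L) ≤ exp ((univ.erase L).sup' hne a) * exp (-δ) := by
          rw [← exp_add, exp_le_exp]; linarith
      _ ≤ A * exp (-δ) := by gcongr; exact exp_sup'_le_sum_exp _ hne a
  have hη : exp (-δ) ≤ 1 / 2 := by
    rw [Real.exp_neg, inv_le_comm₀ (exp_pos δ) (by norm_num)]
    linarith [add_one_le_exp δ, log_nonneg hn.le]
  have hgrowth := one_add_mul_mul_lt_mul_exp_sub_one (k := δ - log n) (u := a L - b L)
    (by linarith) (sub_pos.mpr hab) (exp_pos _).le hη (exp_neg_mul_sub_log_lt_log_sub_log hn δ)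
  have hgap := blockBoltz_sub_blockBoltz_gt (θ := δ - log (n - 1)) (k := δ - log n) hA hab
    (by linarith) hT hx (by convert hgrowth using 2; ring)
  rw [boltz_eq_blockBoltz a L, boltz_eq_blockBoltz b L, hA_b, hT_b, hZ_b]
  convert hgap using 2
  ring

theorem statement13 (n : ℕ) (hn : 2 ≤ n) (a b : Fin n → ℝ) (δ : ℝ)
    (hδ : Real.log n + 3 < δ)
    (heq : ∀ i : Fin n, (i : ℕ) < n - 1 → a i = b i)
    (hmax : a ⟨n - 1, by omega⟩ <
      (Finset.univ.filter (fun i : Fin n => (i : ℕ) < n - 1)).sup'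
        (⟨⟨0, by omega⟩, by simp; omega⟩) a - δ)
    (hab : b ⟨n - 1, by omega⟩ < a ⟨n - 1, by omega⟩) :
    (a ⟨n - 1, by omega⟩ - b ⟨n - 1, by omega⟩) *
        (δ + a ⟨n - 1, by omega⟩ - b ⟨n - 1, by omega⟩ - Real.log n - 1) *
        (Real.exp (b ⟨n - 1, by omega⟩) / ∑ i, Real.exp (b i))
      < boltz b - boltz a := by
  have hS : univ.filter (fun i : Fin n => (i : ℕ) < n - 1) = univ.erase ⟨n - 1, by omega⟩ := by
    ext i
    simp only [mem_filter, mem_univ, true_and, mem_erase, ne_eq, Fin.ext_iff, and_true]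
    have := i.isLt
    omega
  have hne : (univ.erase (⟨n - 1, by omega⟩ : Fin n)).Nonempty :=
    hS ▸ ⟨⟨0, by omega⟩, by simp; omega⟩
  refine boltz_sub_boltz_gt a b _ δ hδ (fun i hi => heq i ?_) hne ?_ hab
  · simpa [← hS] using hi
  · convert hmax using 2
    exact sup'_congr _ hS.symm fun _ _ => rfl
end
end
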